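/- Let p be a prime, a ≥ 1, and n = p^a. If c : Fin n → ℤ satisfies c 0 + c 1 + ⋯ + c (n−1) = 1, then for every r : Fin n → ℚ the linear system (circulant c) · x = r has a unique solution x : Fin n → ℚ; equivalently, the circulant matrix of c is invertible as a matrix over ℚ. -/

import Mathlib

/-!
Write `P` for the cyclic shift matrix, so that `circulant c = f(P)` with `f = ∑ cᵢ Xⁱ` and
`f(1) = ∑ cᵢ = 1`. Modulo `p` we have `(P - 1)^(p^a) = P^(p^a) - 1 = 0`, and `f - 1` is a multiple
of `X - 1`, so `circulant c` is `1` plus a nilpotent matrix, hence a unit over `ZMod p`.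
Its integer determinant is therefore nonzero modulo `p`, in particular nonzero in `ℚ`.
-/

open Matrix Polynomial
open Fin.NatCast

theorem isUnit_aeval_of_pow_eq_one {R A : Type*} [CommRing R] [Ring A] [Algebra R A] (p a : ℕ)
    [ExpChar A p] {x : A} (hx : x ^ p ^ a = 1) {f : R[X]} (hf : f.eval 1 = 1) :
    IsUnit (aeval x f) := by
  obtain ⟨g, hg⟩ : X - 1 ∣ f - 1 := by
    simpa [hf] using X_sub_C_dvd_sub_C_eval (a := (1 : R)) (p := f)
  have hnil : IsNilpotent (aeval x (X - 1 : R[X])) :=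
    ⟨p ^ a, by simp [sub_pow_expChar_pow_of_commute _ _ (Commute.one_right x), hx]⟩
  have hfg : aeval x f = 1 + aeval x ((X - 1) * g) := by rw [← hg]; simp
  rw [hfg, map_mul]
  exact (((Commute.all _ g).map (aeval x)).isNilpotent_mul_right hnil).isUnit_one_add

namespace Matrix

section Shift

variable {R : Type*} [CommRing R] {n : ℕ} [NeZero n]

theorem circulant_single_one_pow (k : ℕ) :
    circulant (Pi.single (1 : Fin n) (1 : R)) ^ k = circulant (Pi.single (k : Fin n) 1) := by
  induction k with
  | zero => simp
  | succ k ih =>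
    rw [pow_succ, ih, circulant_mul]
    ext i
    simp [mulVec_single, circulant_apply, Pi.single_apply, sub_eq_iff_eq_add, eq_comm (a := i),
      add_comm]

theorem circulant_eq_sum_smul_pow (v : Fin n → R) :
    circulant v = ∑ i : Fin n, v i • circulant (Pi.single (1 : Fin n) (1 : R)) ^ (i : ℕ) := by
  ext i j
  simp [circulant_single_one_pow, Matrix.sum_apply, circulant_apply, Pi.single_apply]

theorem circulant_eq_aeval (v : Fin n → R) :
    circulant v = aeval (circulant (Pi.single (1 : Fin n) (1 : R)))
      (∑ i : Fin n, monomial i (v i)) := by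
  simp [circulant_eq_sum_smul_pow v, aeval_monomial, Algebra.smul_def]

end Shift

theorem isUnit_circulant_of_sum_eq_one {R : Type*} [CommRing R] (p a : ℕ) [Fact p.Prime]
    [CharP R p] {v : Fin (p ^ a) → R} (hv : ∑ i, v i = 1) : IsUnit (circulant v) := by
  have : NeZero p := ⟨(Fact.out : p.Prime).ne_zero⟩
  rw [circulant_eq_aeval]
  refine isUnit_aeval_of_pow_eq_one p a ?_ (by simpa [eval_finsetSum] using hv)
  simp [circulant_single_one_pow]

theorem det_circulant_ne_zero_of_sum_eq_one (p a : ℕ) (hp : p.Prime) {c : Fin (p ^ a) → ℤ}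
    (hc : ∑ i, c i = 1) : (circulant c).det ≠ 0 := by
  have : Fact p.Prime := ⟨hp⟩
  have hunit : IsUnit (circulant fun i => (c i : ZMod p)) :=
    isUnit_circulant_of_sum_eq_one p a (by exact_mod_cast congrArg (Int.cast : ℤ → ZMod p) hc)
  intro hdet
  rw [isUnit_iff_isUnit_det, ← map_circulant, ← Int.cast_det, hdet] at hunit
  simp at hunit

end Matrix

theorem circulant_system_unique_solution_general (p a : ℕ) (hp : p.Prime)
    (n : ℕ) (hn : n = p ^ a)
    (c : Fin n → ℤ) (hc : ∑ i, c i = 1) :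
    (∀ r : Fin n → ℚ, ∃! x : Fin n → ℚ,
      (Matrix.circulant fun i => (c i : ℚ)).mulVec x = r) ∧
    IsUnit (Matrix.circulant fun i => (c i : ℚ)) := by
  subst hn
  have hdet : IsUnit (circulant fun i => (c i : ℚ)).det := by
    rw [← map_circulant, ← Int.cast_det, isUnit_iff_ne_zero]
    exact_mod_cast det_circulant_ne_zero_of_sum_eq_one p a hp hc
  have hunit := (isUnit_iff_isUnit_det _).mpr hdet
  exact ⟨(Function.bijective_iff_existsUnique _).mp
    ⟨mulVec_injective_iff_isUnit.mpr hunit, mulVec_surjective_iff_isUnit.mpr hunit⟩, hunit⟩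

theorem circulant_system_unique_solution (p a : ℕ) (hp : p.Prime) (ha : 1 ≤ a)
    (n : ℕ) (hn : n = p ^ a)
    (c : Fin n → ℤ) (hc : ∑ i, c i = 1) :
    (∀ r : Fin n → ℚ, ∃! x : Fin n → ℚ,
      (Matrix.circulant fun i => (c i : ℚ)).mulVec x = r) ∧
    IsUnit (Matrix.circulant fun i => (c i : ℚ)) :=
  circulant_system_unique_solution_general p a hp n hn c hc
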